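/- If the reduced graph of G is a Hamiltonian path P_R inducing a linear order on SCCs, then for any two vertices u, v in distinct SCCs with sccOf(u) before sccOf(v) in that order, every Hamiltonian path of G from s to e visits u before v. -/

import Mathlib

/-!
Following the condensation path from `sccOf u` to `sccOf v` (an arc between components, then a
walk inside the next component) shows that `u` reaches `v`. Following a Hamiltonian path forward
shows that `v` reaches `u` whenever `v` is visited no later than `u`; both together would put `u`
and `v` in the same component.
-/

variable {V : Type*}

/-- Reachability in a directed graph given by arc relation `A`. -/
def Reach (A : V → V → Prop) : V → V → Prop := Relation.ReflTransGen A

/-- Two vertices are in the same strongly connected component. -/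
def SameSCC (A : V → V → Prop) (u v : V) : Prop := Reach A u v ∧ Reach A v u

/-- The strongly connected component of a vertex. -/
def sccOf (A : V → V → Prop) (v : V) : Set V := {u | SameSCC A v u}

/-- A set is a strongly connected component. -/
def IsSCC (A : V → V → Prop) (X : Set V) : Prop := ∃ v, X = sccOf A v

/-- Arcs of the reduced graph (condensation): between distinct SCCs joined by an arc of `A`. -/
def CondArc (A : V → V → Prop) (X Y : Set V) : Prop :=
  IsSCC A X ∧ IsSCC A Y ∧ X ≠ Y ∧ ∃ u ∈ X, ∃ v ∈ Y, A u v

/-- A directed graph is acyclic: no arc lies on a directed cycle. -/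
def Acyclic (A : V → V → Prop) : Prop := ∀ u v, A u v → ¬ Reach A v u

/-- A Hamiltonian path of the digraph `A`, as a duplicate-free list visiting every vertex. -/
def IsHamList (A : V → V → Prop) (p : List V) : Prop :=
  p.Chain' A ∧ p.Nodup ∧ ∀ v, v ∈ p

/-- A Hamiltonian path from `s` to `e`. -/
def IsHamPath (A : V → V → Prop) (s e : V) (p : List V) : Prop :=
  IsHamList A p ∧ p.head? = some s ∧ p.getLast? = some e

/-- A Hamiltonian path of the reduced graph: a duplicate-free list of SCCs, chained by
condensation arcs, containing every SCC. -/
def RHamPath (A : V → V → Prop) (P : List (Set V)) : Prop :=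
  (∀ X ∈ P, IsSCC A X) ∧ P.Chain' (CondArc A) ∧ P.Nodup ∧ ∀ X, IsSCC A X → X ∈ P

open Relation

theorem List.IsChain.reflTransGen_getElem {α : Type*} {R : α → α → Prop} {l : List α}
    (hl : l.IsChain R) {i j : ℕ} (hij : i ≤ j) (hj : j < l.length) :
    ReflTransGen R l[i] l[j] := by
  rcases hij.eq_or_lt with rfl | hlt
  · rfl
  · have hpw : l.Pairwise (ReflTransGen R) :=
      List.isChain_iff_pairwise.mp (hl.imp fun _ _ => ReflTransGen.single)
    exact List.pairwise_iff_getElem.mp hpw i j _ hj hlt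

theorem mem_sccOf_self (A : V → V → Prop) (v : V) : v ∈ sccOf A v :=
  ⟨ReflTransGen.refl, ReflTransGen.refl⟩

theorem sccOf_eq_of_sameSCC {A : V → V → Prop} {u v : V} (h : SameSCC A u v) :
    sccOf A u = sccOf A v := by
  ext w
  exact ⟨fun hw => ⟨h.2.trans hw.1, hw.2.trans h.1⟩,
    fun hw => ⟨h.1.trans hw.1, hw.2.trans h.2⟩⟩

theorem IsSCC.reach {A : V → V → Prop} {X : Set V} (hX : IsSCC A X)
    {x y : V} (hx : x ∈ X) (hy : y ∈ X) : Reach A x y := by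
  obtain ⟨w, rfl⟩ := hX
  exact hx.2.trans hy.1

theorem IsSCC.reach_of_reflTransGen_condArc {A : V → V → Prop} {X Y : Set V} (hX : IsSCC A X)
    (hXY : ReflTransGen (CondArc A) X Y) {x y : V} (hx : x ∈ X) (hy : y ∈ Y) : Reach A x y := by
  induction hXY generalizing y with
  | refl => exact hX.reach hx hy
  | tail _ hZY ih =>
    obtain ⟨-, hY, -, a, ha, b, hb, hab⟩ := hZY
    exact ((ih ha).tail hab).trans (hY.reach hb hy)

/-- If the reduced graph of `G` is a Hamiltonian path `P` and `sccOf u` comes before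
`sccOf v` on `P`, then every Hamiltonian path of `G` from `s` to `e` visits `u` before `v`. -/
theorem scc_order_forces_visit_order [DecidableEq V]
    (A : V → V → Prop) (s e : V)
    (P : List (Set V)) (hP : RHamPath A P)
    (u v : V) (hne : sccOf A u ≠ sccOf A v)
    (i j : ℕ) (hij : i < j)
    (hi : P[i]? = some (sccOf A u)) (hj : P[j]? = some (sccOf A v)) :
    ∀ H : List V, IsHamPath A s e H → H.idxOf u < H.idxOf v := by
  obtain ⟨hjP, hPj⟩ := List.getElem?_eq_some_iff.mp hj
  obtain ⟨hiP, hPi⟩ := List.getElem?_eq_some_iff.mp hi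
  have huv : Reach A u v := by
    have hPij := hP.2.1.reflTransGen_getElem hij.le hjP
    rw [hPi, hPj] at hPij
    exact IsSCC.reach_of_reflTransGen_condArc ⟨u, rfl⟩ hPij (mem_sccOf_self A u)
      (mem_sccOf_self A v)
  intro H hH
  by_contra! hvu_idx
  have hvu : Reach A v u := by
    have hu : H.idxOf u < H.length := List.idxOf_lt_length_iff.mpr (hH.1.2.2 u)
    simpa only [Reach, List.getElem_idxOf] using hH.1.1.reflTransGen_getElem hvu_idx hu
  exact hne (sccOf_eq_of_sameSCC ⟨huv, hvu⟩)
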